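/- Second moment drift inequality: with W(ν) := ‖ν‖², the quantity L W(ν) := -2‖ν‖ ν[f] + [ν[f] + Λ(1-‖ν‖)]_+ (2‖ν‖ + 1/N) satisfies L W(ν) ≤ α - β W(ν) for suitable constants α, β > 0 depending only on f_min, ‖f‖_∞, Λ, N. -/

import Mathlib

/-!
Write `m = ‖ν‖` and `I = ν[f]`, so that `f_min m ≤ I ≤ ‖f‖_∞ m`. If the positive part vanishes,
`L W(ν) = -2 m I ≤ -2 f_min m²`. Otherwise `L W(ν) = 2Λ m (1 - m) + (I + Λ(1 - m))/N`, which for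
`N ≥ 1` is at most `(Λ + ‖f‖_∞) m + Λ - 2Λ m²`; completing the square absorbs the linear term into
half of the quadratic one, leaving `(Λ + ‖f‖_∞)²/(4Λ) + Λ - Λ m²`.
-/

open Real MeasureTheory Set

/-- Total mass of a measure on ℝ, as a real number. -/
noncomputable def mass (ν : Measure ℝ) : ℝ := (ν Set.univ).toReal

/-- The generator applied to W(ν) = ‖ν‖². -/
noncomputable def LW (f : ℝ → ℝ) (Λ N : ℝ) (ν : Measure ℝ) : ℝ :=
  -(2 * mass ν * ∫ u, f u ∂ν) +
    max ((∫ u, f u ∂ν) + Λ * (1 - mass ν)) 0 * (2 * mass ν + 1 / N)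

section MassBounds

variable {ν : Measure ℝ} {f : ℝ → ℝ} {c : ℝ}

lemma mul_mass_le_integral [IsFiniteMeasure ν] (hf : Integrable f ν) (hc : ∀ u, c ≤ f u) :
    c * mass ν ≤ ∫ u, f u ∂ν := by
  have := integral_mono (integrable_const c) hf hc
  rwa [integral_const, smul_eq_mul, mul_comm] at this

lemma integral_le_mul_mass [IsFiniteMeasure ν] (hf : Integrable f ν) (hc : ∀ u, f u ≤ c) :
    ∫ u, f u ∂ν ≤ c * mass ν := by
  have := integral_mono hf (integrable_const c) hc
  rwa [integral_const, smul_eq_mul, mul_comm] at this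

lemma mass_nonneg : 0 ≤ mass ν := ENNReal.toReal_nonneg

end MassBounds

lemma mul_sub_mul_sq_le {a b : ℝ} (ha : 0 < a) (x : ℝ) : b * x - a * x ^ 2 ≤ b ^ 2 / (4 * a) := by
  rw [le_div_iff₀ (by positivity)]
  nlinarith [sq_nonneg (2 * a * x - b)]

section DriftCases

variable {m I Λ N : ℝ}

lemma drift_le_of_pos_part_eq_zero {c : ℝ} (hm : 0 ≤ m) (hI : c * m ≤ I)
    (h : I + Λ * (1 - m) ≤ 0) :
    -(2 * m * I) + max (I + Λ * (1 - m)) 0 * (2 * m + 1 / N) ≤ -(2 * c) * m ^ 2 := by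
  rw [max_eq_right h]
  nlinarith [mul_le_mul_of_nonneg_left hI hm]

lemma drift_le_of_pos_part_nonneg {B : ℝ} (hΛ : 0 < Λ) (hN : 1 ≤ N)
    (hI : I ≤ B * m) (h : 0 ≤ I + Λ * (1 - m)) :
    -(2 * m * I) + max (I + Λ * (1 - m)) 0 * (2 * m + 1 / N) ≤
      (Λ + B) ^ 2 / (4 * Λ) + Λ - Λ * m ^ 2 := by
  rw [max_eq_left h]
  have hdivN : (I + Λ * (1 - m)) * (1 / N) ≤ I + Λ * (1 - m) :=
    mul_le_of_le_one_right h ((div_le_one (by linarith)).2 hN)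
  nlinarith [mul_sub_mul_sq_le hΛ (b := Λ + B) m]

end DriftCases

/-- Second moment drift inequality: L W(ν) ≤ α - β W(ν). -/
theorem second_moment_drift (f : ℝ → ℝ) (fmin B Λ N : ℝ)
    (hfmin : 0 < fmin) (hlow : ∀ u, fmin ≤ f u) (hup : ∀ u, f u ≤ B)
    (hmeas : Measurable f) (hΛ : 0 < Λ) (hN : 1 ≤ N) :
    ∃ α β : ℝ, 0 < α ∧ 0 < β ∧
      ∀ ν : Measure ℝ, IsFiniteMeasure ν →
        LW f Λ N ν ≤ α - β * (mass ν) ^ 2 := by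
  refine ⟨(Λ + B) ^ 2 / (4 * Λ) + Λ, min Λ (2 * fmin), by positivity,
    lt_min hΛ (by linarith), fun ν _ => ?_⟩
  have hf : Integrable f ν :=
    Integrable.of_mem_Icc fmin B hmeas.aemeasurable (ae_of_all _ fun u => ⟨hlow u, hup u⟩)
  have hm := mass_nonneg (ν := ν)
  have hβm : min Λ (2 * fmin) * mass ν ^ 2 ≤ Λ * mass ν ^ 2 := by gcongr; exact min_le_left _ _
  have hβf : min Λ (2 * fmin) * mass ν ^ 2 ≤ 2 * fmin * mass ν ^ 2 := by
    gcongr; exact min_le_right _ _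
  unfold LW
  rcases le_total (∫ u, f u ∂ν + Λ * (1 - mass ν)) 0 with h | h
  · have hdrift := drift_le_of_pos_part_eq_zero (N := N) hm (mul_mass_le_integral hf hlow) h
    have hα : 0 ≤ (Λ + B) ^ 2 / (4 * Λ) := by positivity
    linarith
  · have hdrift := drift_le_of_pos_part_nonneg hΛ hN (integral_le_mul_mass hf hup) h
    linarith
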